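/- In the reduction, if F is an O-border basis for some order ideal O and X_i appears in clause C_l, then the monomials t_{X_i} and t_{X_i}·x_{c_l}/c_l cannot both lie in ∂O. -/

import Mathlib

namespace BBD

open Finsupp

variable {σ : Type*}

/-- `t'` is a child of `t`: `t' · y = t` for some variable `y`. -/
def isChild (t' t : σ →₀ ℕ) : Prop := ∃ y : σ, t' + Finsupp.single y 1 = t

/-- The set of children of a monomial `t`. -/
def children (t : σ →₀ ℕ) : Set (σ →₀ ℕ) := {t' | isChild t' t}

/-- The children of a set of monomials. -/
def childrenSet (S : Set (σ →₀ ℕ)) : Set (σ →₀ ℕ) := ⋃ s ∈ S, children s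

/-- The set of parents of a monomial `t`. -/
def parents (t : σ →₀ ℕ) : Set (σ →₀ ℕ) := {t' | isChild t t'}

/-- An order ideal: a nonempty finite set of monomials closed under divisibility. -/
def IsOrderIdeal (O : Set (σ →₀ ℕ)) : Prop :=
  O.Finite ∧ O.Nonempty ∧ ∀ t ∈ O, ∀ t', t' ≤ t → t' ∈ O

/-- The border of a set of monomials: `(T₁ · O) \ O`. -/
def borderOf (O : Set (σ →₀ ℕ)) : Set (σ →₀ ℕ) :=
  {t | t ∉ O ∧ ∃ t' ∈ O, ∃ y : σ, t = t' + Finsupp.single y 1}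


/-! ### Border prebases and border bases -/

/-- `G` is an `O`-border prebasis: there is a bijection `e` from the border of `O` to `G`
such that `e b = b - Σ α_i t_i` with the `t_i ∈ O`. -/
def IsBorderPrebasis {K : Type*} [Field K] (O : Set (σ →₀ ℕ)) (G : Set (MvPolynomial σ K)) :
    Prop :=
  ∃ e : borderOf O ≃ G, ∀ b : borderOf O,
    MvPolynomial.coeff (b : σ →₀ ℕ) (e b : MvPolynomial σ K) = 1 ∧
    ((e b : MvPolynomial σ K).support : Set (σ →₀ ℕ)) \ {(b : σ →₀ ℕ)} ⊆ O

/-- `G` is an `O`-border basis of the ideal `a`: it is an `O`-border prebasis contained in `a`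
such that the residue classes of the elements of `O` form a vector-space basis of the
quotient ring. -/
def IsBorderBasis {K : Type*} [Field K] (O : Set (σ →₀ ℕ)) (a : Ideal (MvPolynomial σ K))
    (G : Set (MvPolynomial σ K)) : Prop :=
  IsBorderPrebasis O G ∧ (∀ g ∈ G, g ∈ a) ∧
  LinearIndependent K
    (fun t : O => Ideal.Quotient.mk a (MvPolynomial.monomial (t : σ →₀ ℕ) (1 : K))) ∧
  Submodule.span K
    (Set.range fun t : O => Ideal.Quotient.mk a (MvPolynomial.monomial (t : σ →₀ ℕ) (1 : K)))
    = ⊤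

/-! ### Setup for the 3,4-SAT reduction -/

/-- The indeterminates `x_1,…,x_n, x̄_1,…,x̄_n, c_1,…,c_m, x_{c_1},…,x_{c_m}, X`. -/
abbrev Var (n m : ℕ) := (Fin n ⊕ Fin n) ⊕ (Fin m ⊕ Fin m) ⊕ Unit

variable {n m : ℕ}

def xVar (i : Fin n) : Var n m := Sum.inl (Sum.inl i)
def xbarVar (i : Fin n) : Var n m := Sum.inl (Sum.inr i)
def cVar (l : Fin m) : Var n m := Sum.inr (Sum.inl (Sum.inl l))
def xcVar (l : Fin m) : Var n m := Sum.inr (Sum.inl (Sum.inr l))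
def XVar : Var n m := Sum.inr (Sum.inr ())

-- A 3,4-SAT instance: clause `l` consists of the three literals `lit l 0, lit l 1, lit l 2`,
-- where the literal `(i, true)` is `X_i` and `(i, false)` is `X̄_i`.
variable (lit : Fin m → Fin 3 → Fin n × Bool)

/-- The set `S_i` of (indices of) clauses in which `X_i` or `X̄_i` appears. -/
def Socc (i : Fin n) : Finset (Fin m) :=
  Finset.univ.filter fun l => ∃ k : Fin 3, (lit l k).1 = i

/-- `t_{C_{x_i}} = (∏_{j ∈ S_i} c_j) · X^{4 - |S_i|}`. -/
noncomputable def tC (i : Fin n) : Var n m →₀ ℕ :=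
  (∑ l ∈ Socc lit i, Finsupp.single (cVar l) 1) +
    Finsupp.single XVar (4 - (Socc lit i).card)

/-- `t_{X_i} = x_i · x̄_i² · t_{C_{x_i}}`. -/
noncomputable def tX (i : Fin n) : Var n m →₀ ℕ :=
  Finsupp.single (xVar i) 1 + Finsupp.single (xbarVar i) 2 + tC lit i

/-- `t_{X̄_i} = x_i² · x̄_i · t_{C_{x_i}}`. -/
noncomputable def tXbar (i : Fin n) : Var n m →₀ ℕ :=
  Finsupp.single (xVar i) 2 + Finsupp.single (xbarVar i) 1 + tC lit i

/-- The term `t_L · x_{c_l} / c_l` associated to a literal `L` and a clause `C_l`. -/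
noncomputable def termLit (p : Fin n × Bool) (l : Fin m) : Var n m →₀ ℕ :=
  (if p.2 then tX lit p.1 else tXbar lit p.1) + Finsupp.single (xcVar l) 1 -
    Finsupp.single (cVar l) 1

/-- `P_i = P_{X_i} ∪ P_{X̄_i}`. -/
noncomputable def Pset (i : Fin n) : Set (Var n m →₀ ℕ) :=
  {t | ∃ l : Fin m, (∃ k : Fin 3, lit l k = (i, true)) ∧
    t = tX lit i + Finsupp.single (xcVar l) 1} ∪
  {t | ∃ l : Fin m, (∃ k : Fin 3, lit l k = (i, false)) ∧
    t = tXbar lit i + Finsupp.single (xcVar l) 1}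

/-- The region `R_i = k(P_i)`, the set of children of `P_i`. -/
noncomputable def Reg (i : Fin n) : Set (Var n m →₀ ℕ) := childrenSet (Pset lit i)

/-- `K_i = K_{X_i} ∪ K_{X̄_i} ∪ {t_{X_i}, t_{X̄_i}}`. -/
noncomputable def Kset (i : Fin n) : Set (Var n m →₀ ℕ) :=
  {tX lit i, tXbar lit i} ∪
  {t | ∃ l : Fin m, (∃ k : Fin 3, lit l k = (i, true)) ∧ t = termLit lit (i, true) l} ∪
  {t | ∃ l : Fin m, (∃ k : Fin 3, lit l k = (i, false)) ∧ t = termLit lit (i, false) l}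

/-- The set of polynomials `F = F_v ∪ F_c ∪ F₁ ∪ F₂` constructed in the reduction. -/
noncomputable def Fset (K : Type*) [Field K] : Set (MvPolynomial (Var n m) K) :=
  {p | ∃ i : Fin n, p = MvPolynomial.monomial (tX lit i) (1 : K) +
    MvPolynomial.monomial (tXbar lit i) (1 : K)} ∪
  {p | ∃ l : Fin m, p = ∑ k : Fin 3, MvPolynomial.monomial (termLit lit (lit l k) l) (1 : K)} ∪
  {p | ∃ t : Var n m →₀ ℕ, (t.sum fun _ e => e) = 8 ∧ p = MvPolynomial.monomial t (1 : K)} ∪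
  {p | ∃ i : Fin n, ∃ t ∈ Reg lit i \ Kset lit i, p = MvPolynomial.monomial t (1 : K)}

/-! The monomial `t_{X_i} · x_{c_l}` has degree 8, so as the support of a polynomial of `F₁` it
lies in the border `∂O`. Its children are `t_{X_i}`, `t_{X_i} · x_{c_l} / c_l` and monomials of
`F₂`, which lie in `∂O` as well. If the first two were also in `∂O`, all children of
`t_{X_i} · x_{c_l}` would lie in `∂O`; but a border monomial has a child in `O`. -/

theorem IsBorderPrebasis.mem_borderOf_of_monomial_mem {K : Type*} [Field K]
    {O : Set (σ →₀ ℕ)} {G : Set (MvPolynomial σ K)} (hG : IsBorderPrebasis O G)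
    {t : σ →₀ ℕ} (ht : MvPolynomial.monomial t (1 : K) ∈ G) : t ∈ borderOf O := by
  classical
  obtain ⟨e, he⟩ := hG
  have hcoeff := (he (e.symm ⟨_, ht⟩)).1
  rw [Equiv.apply_symm_apply, MvPolynomial.coeff_monomial] at hcoeff
  split_ifs at hcoeff with h
  · exact h ▸ (e.symm ⟨_, ht⟩).2
  · exact absurd hcoeff zero_ne_one

theorem le_of_mem_children {t' t : σ →₀ ℕ} (h : t' ∈ children t) : t' ≤ t := by
  obtain ⟨y, rfl⟩ := h
  exact le_self_add

theorem notMem_borderOf_of_children_subset {O : Set (σ →₀ ℕ)} {t : σ →₀ ℕ}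
    (h : children t ⊆ borderOf O) : t ∉ borderOf O := by
  rintro ⟨-, t', ht'O, y, rfl⟩
  exact (h ⟨y, rfl⟩).1 ht'O

theorem degree_tX_add_single_xcVar {i : Fin n} (l : Fin m) (h : (Socc lit i).card ≤ 4) :
    (tX lit i + single (xcVar l) 1).degree = 8 := by
  simp only [tX, tC, map_add, map_sum, degree_single, Finset.sum_const, smul_eq_mul, mul_one]
  omega

theorem eq_of_mem_children_of_mem_Kset {i : Fin n} {l : Fin m} {t : Var n m →₀ ℕ}
    (ht : t ∈ children (tX lit i + single (xcVar l) 1)) (hK : t ∈ Kset lit i) :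
    t = tX lit i ∨ t = termLit lit (i, true) l := by
  have hle := le_of_mem_children ht
  -- The `x̄`-literal terms have `x_i`-exponent 2, against 1 in `t_{X_i} · x_{c_l}`; the
  -- `x_{c_{l'}}`-exponent of `t_{X_i} · x_{c_{l'}} / c_{l'}` forces `l' = l`.
  rcases hK with ((rfl | rfl) | ⟨l', -, rfl⟩) | ⟨l', -, rfl⟩
  · exact Or.inl rfl
  · have h := hle (xVar i)
    simp [tX, tXbar, tC, xVar, xbarVar, cVar, xcVar, XVar] at h
  · have h := hle (xcVar l')
    simp [termLit, tX, tC, xVar, xbarVar, cVar, xcVar, XVar, single_apply] at h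
    split_ifs at h with hl
    · exact Or.inr (hl ▸ rfl)
    · omega
  · have h := hle (xVar i)
    simp [termLit, tX, tXbar, tC, xVar, xbarVar, cVar, xcVar, XVar] at h

theorem children_tX_add_single_xcVar_subset {i : Fin n} {l : Fin m}
    (hocc : ∃ k : Fin 3, lit l k = (i, true)) :
    children (tX lit i + single (xcVar l) 1) ⊆
      {tX lit i, termLit lit (i, true) l} ∪ (Reg lit i \ Kset lit i) := by
  intro t ht
  by_cases hK : t ∈ Kset lit i
  · exact Or.inl (eq_of_mem_children_of_mem_Kset lit ht hK)
  · exact Or.inr ⟨Set.mem_biUnion (Or.inl ⟨l, hocc, rfl⟩) ht, hK⟩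

theorem not_both_in_border {K : Type*} [Field K]
    (h4 : ∀ i : Fin n, (Socc lit i).card ≤ 4)
    (O : Set (Var n m →₀ ℕ))
    (hBB : IsBorderBasis O (Ideal.span (Fset lit K)) (Fset lit K))
    (i : Fin n) (l : Fin m) (hocc : ∃ k : Fin 3, lit l k = (i, true)) :
    ¬ (tX lit i ∈ borderOf O ∧ termLit lit (i, true) l ∈ borderOf O) := by
  rintro ⟨hX, hL⟩
  have hP : tX lit i + single (xcVar l) 1 ∈ borderOf O :=
    hBB.1.mem_borderOf_of_monomial_mem
      (Or.inl (Or.inr ⟨_, degree_tX_add_single_xcVar lit l (h4 i), rfl⟩))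
  refine notMem_borderOf_of_children_subset (fun t ht => ?_) hP
  rcases children_tX_add_single_xcVar_subset lit hocc ht with (rfl | rfl) | hR
  · exact hX
  · exact hL
  · exact hBB.1.mem_borderOf_of_monomial_mem (Or.inr ⟨i, t, hR, rfl⟩)

end BBD
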